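/- For every natural number n and every t ∈ ℝ with t ≠ 0, one has (2n+1)!! · (D^n f)(t) = Γ(n+3/2) · h_{n+1/2}(t²/4), where f(s) := sinh(s)/s and D is the differential operator (Df)(t) := f′(t)/t applied n times. Equivalently, B_{n+1/2}(t) = 1/( (2n+1)!! · (D^n f)(t) ) for t ≠ 0. -/

import Mathlib

open MeasureTheory

/-- Characteristic function of a measure on ℝ: `t ↦ ∫ e^{itx} dμ(x)`. -/
noncomputable def charFn (μ : Measure ℝ) (t : ℝ) : ℂ :=
  ∫ x, Complex.exp (t * x * Complex.I) ∂μ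

/-- `h_ν(u) = ∑_{k=0}^∞ u^k / (k! Γ(ν+k+1))`. -/
noncomputable def hnu (ν : ℝ) (u : ℝ) : ℝ :=
  ∑' k : ℕ, u ^ k / (Nat.factorial k * Real.Gamma (ν + k + 1))

/-- `B_ν(t) = 1/(Γ(ν+1) h_ν(t²/4)) = t^ν/(2^ν Γ(ν+1) I_ν(t))`. -/
noncomputable def Bnu (ν : ℝ) (t : ℝ) : ℝ :=
  1 / (Real.Gamma (ν + 1) * hnu ν (t ^ 2 / 4))

/-- `b_ν(t) = exp(−(t²/2)·h_{ν+1}(t²/4)/h_ν(t²/4)) = exp(−t·I_{ν+1}(t)/I_ν(t))`. -/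
noncomputable def bnu (ν : ℝ) (t : ℝ) : ℝ :=
  Real.exp (-(t ^ 2 / 2) * hnu (ν + 1) (t ^ 2 / 4) / hnu ν (t ^ 2 / 4))

/-- The `n`-fold convolution power of a measure on ℝ. -/
noncomputable def convPow (ρ : Measure ℝ) : ℕ → Measure ℝ
  | 0 => Measure.dirac 0
  | n + 1 => (convPow ρ n).conv ρ

/-- A probability measure on ℝ is infinitely divisible if for every `n ≥ 1` it is the
`n`-fold convolution of some probability measure. -/
def InfDivisible (μ : Measure ℝ) : Prop :=
  ∀ n : ℕ, 1 ≤ n → ∃ ρ : Measure ℝ, IsProbabilityMeasure ρ ∧ convPow ρ n = μ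

/-- The operator `D : f ↦ (t ↦ f′(t)/t)`. -/
noncomputable def Dop (g : ℝ → ℝ) : ℝ → ℝ := fun t => deriv g t / t

/-- `f(s) = sinh(s)/s`, extended by `f(0) = 1`. -/
noncomputable def sinhc (s : ℝ) : ℝ := if s = 0 then 1 else Real.sinh s / s

/-!
Termwise differentiation gives `h_ν' = h_{ν+1}`, so by the chain rule `D (t ↦ h_ν(t²/4)) = ½ h_{ν+1}(t²/4)` away from `0`. Comparing the series of `sinh`
with the half-integer values of `Γ` shows `sinh t / t = (√π / 2) h_{1/2}(t²/4)`, hence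
`Dⁿ f = (√π / 2ⁿ⁺¹) h_{n+1/2}(t²/4)`, and `(2n+1)‼ √π / 2ⁿ⁺¹ = Γ(n + 3/2)`.
-/

open Real Nat Filter Topology

noncomputable def hnuTerm (ν u : ℝ) (k : ℕ) : ℝ := u ^ k / (k ! * Gamma (ν + k + 1))

lemma hnu_eq_tsum_hnuTerm (ν u : ℝ) : hnu ν u = ∑' k, hnuTerm ν u k := rfl

lemma Real.Gamma_mul_pow_le_Gamma_add_nat {x : ℝ} (hx : 0 < x) (k : ℕ) :
    Gamma x * x ^ k ≤ Gamma (x + k) := by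
  induction k with
  | zero => simp
  | succ k ih =>
    have hΓ : 0 < Gamma x := Gamma_pos_of_pos hx
    rw [Nat.cast_succ, ← add_assoc, Gamma_add_one (by positivity)]
    calc Gamma x * x ^ (k + 1) = x * (Gamma x * x ^ k) := by ring
      _ ≤ (x + k) * Gamma (x + k) := by gcongr; linarith

section hnu

variable {ν : ℝ}

lemma abs_hnuTerm_le (hν : -1 < ν) {u R : ℝ} (hu : |u| ≤ R) (k : ℕ) :
    |hnuTerm ν u k| ≤ (R / (ν + 1)) ^ k / k ! / Gamma (ν + 1) := by
  have hν₁ : 0 < ν + 1 := by linarith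
  have hΓ : Gamma (ν + 1) * (ν + 1) ^ k ≤ Gamma (ν + k + 1) := by
    simpa only [add_right_comm] using Gamma_mul_pow_le_Gamma_add_nat hν₁ k
  have hden : 0 < k ! * Gamma (ν + k + 1) :=
    mul_pos (by positivity) (Gamma_pos_of_pos (by linarith [(k.cast_nonneg : (0 : ℝ) ≤ k)]))
  rw [hnuTerm, abs_div, abs_pow, abs_of_pos hden, div_pow, div_div, div_div]
  refine div_le_div₀ (pow_nonneg ((abs_nonneg u).trans hu) k)
    (pow_le_pow_left₀ (abs_nonneg u) hu k) (by positivity) ?_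
  calc (ν + 1) ^ k * (k ! * Gamma (ν + 1)) = k ! * (Gamma (ν + 1) * (ν + 1) ^ k) := by ring
    _ ≤ k ! * Gamma (ν + k + 1) := by gcongr

lemma summable_hnuTerm (hν : -1 < ν) (u : ℝ) : Summable (hnuTerm ν u) :=
  .of_norm_bounded ((summable_pow_div_factorial _).div_const _) fun k => abs_hnuTerm_le hν le_rfl k

lemma hasDerivAt_hnuTerm_succ (ν u : ℝ) (k : ℕ) :
    HasDerivAt (fun v => hnuTerm ν v (k + 1)) (hnuTerm (ν + 1) u k) u := by
  refine ((hasDerivAt_pow (k + 1) u).div_const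
    ((k + 1)! * Gamma (ν + (k + 1 : ℕ) + 1))).congr_deriv ?_
  rw [hnuTerm, factorial_succ, show ν + ((k + 1 : ℕ) : ℝ) + 1 = ν + 1 + k + 1 by push_cast; ring]
  push_cast
  field_simp

lemma hasDerivAt_hnu (hν : -1 < ν) (u : ℝ) : HasDerivAt (hnu ν) (hnu (ν + 1) u) u := by
  -- with the constant term split off, the termwise derivatives are the terms of `h_{ν+1}`
  have hsplit : hnu ν = fun v => (Gamma (ν + 1))⁻¹ + ∑' k, hnuTerm ν v (k + 1) := by
    funext v
    rw [hnu_eq_tsum_hnuTerm, (summable_hnuTerm hν v).tsum_eq_zero_add]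
    simp [hnuTerm]
  have hu : u ∈ Metric.ball (0 : ℝ) (|u| + 1) := by simp
  rw [hsplit]
  refine .const_add _ (hasDerivAt_tsum_of_isPreconnected
    ((summable_pow_div_factorial _).div_const _) Metric.isOpen_ball
    (convex_ball _ _).isPreconnected (fun k y _ => hasDerivAt_hnuTerm_succ ν y k)
    (fun k y hy => abs_hnuTerm_le (by linarith) (mem_ball_zero_iff.mp hy).le k) hu
    ((summable_nat_add_iff 1).mpr (summable_hnuTerm hν u)) hu)

lemma hasDerivAt_hnu_sq_div_four (hν : -1 < ν) (t : ℝ) :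
    HasDerivAt (fun s => hnu ν (s ^ 2 / 4)) (hnu (ν + 1) (t ^ 2 / 4) * (t / 2)) t := by
  refine ((hasDerivAt_hnu hν (t ^ 2 / 4)).comp t
    ((hasDerivAt_pow 2 t).div_const 4)).congr_deriv ?_
  ring

end hnu

lemma Dop_congr {f g : ℝ → ℝ} {t : ℝ} (h : f =ᶠ[𝓝 t] g) : Dop f t = Dop g t := by
  simp only [Dop, h.deriv_eq]

lemma Dop_const_mul_hnu_sq_div_four {ν : ℝ} (hν : -1 < ν) (c : ℝ) {t : ℝ} (ht : t ≠ 0) :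
    Dop (fun s => c * hnu ν (s ^ 2 / 4)) t = c / 2 * hnu (ν + 1) (t ^ 2 / 4) := by
  rw [Dop, ((hasDerivAt_hnu_sq_div_four hν t).const_mul c).deriv]
  field_simp

lemma iterate_Dop_of_eq_hnu_sq_div_four {ν c : ℝ} (hν : -1 < ν) {f : ℝ → ℝ}
    (hf : ∀ s ≠ 0, f s = c * hnu ν (s ^ 2 / 4)) (n : ℕ) :
    ∀ t ≠ 0, Dop^[n] f t = c / 2 ^ n * hnu (ν + n) (t ^ 2 / 4) := by
  induction n with
  | zero => simpa using hf
  | succ n ih =>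
    intro t ht
    have hloc : Dop^[n] f =ᶠ[𝓝 t] fun s => c / 2 ^ n * hnu (ν + n) (s ^ 2 / 4) :=
      eventually_of_mem (isOpen_compl_singleton.mem_nhds ht) ih
    have hνn : -1 < ν + n := by linarith [(n.cast_nonneg : (0 : ℝ) ≤ n)]
    rw [Function.iterate_succ_apply', Dop_congr hloc, Dop_const_mul_hnu_sq_div_four hνn _ ht]
    push_cast
    ring_nf

lemma sinhc_eq_hnu {t : ℝ} (ht : t ≠ 0) : sinhc t = √π / 2 * hnu (1 / 2) (t ^ 2 / 4) := by
  rw [sinhc, if_neg ht, sinh_eq_tsum, hnu, ← tsum_div_const, ← tsum_mul_left]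
  refine tsum_congr fun k => ?_
  rw [show (1 / 2 : ℝ) + k + 1 = k + 1 + 1 / 2 by ring, Gamma_nat_add_one_add_half,
    factorial_eq_mul_doubleFactorial, doubleFactorial_two_mul, div_pow, ← pow_mul,
    show (4 : ℝ) ^ k = 2 ^ k * 2 ^ k by rw [← mul_pow]; norm_num]
  have hπ : √π ≠ 0 := (sqrt_pos.mpr pi_pos).ne'
  push_cast
  field_simp
  ring

theorem stmt18 (n : ℕ) (t : ℝ) (ht : t ≠ 0) :
    ((Nat.doubleFactorial (2 * n + 1) : ℝ)) * (Dop^[n] sinhc) t =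
      Real.Gamma (n + 3 / 2) * hnu (n + 1 / 2) (t ^ 2 / 4) ∧
    Bnu (n + 1 / 2) t =
      1 / ((Nat.doubleFactorial (2 * n + 1) : ℝ) * (Dop^[n] sinhc) t) := by
  have hD : (Dop^[n] sinhc) t = √π / 2 / 2 ^ n * hnu (n + 1 / 2) (t ^ 2 / 4) := by
    rw [iterate_Dop_of_eq_hnu_sq_div_four (by norm_num) (fun s hs => sinhc_eq_hnu hs) n t ht,
      add_comm (1 / 2 : ℝ)]
  have hΓ : Gamma (n + 3 / 2) = (2 * n + 1)‼ * (√π / 2 / 2 ^ n) := by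
    rw [show (n : ℝ) + 3 / 2 = n + 1 + 1 / 2 by ring, Gamma_nat_add_one_add_half, pow_succ]
    ring
  have h₁ : ((2 * n + 1)‼ : ℝ) * (Dop^[n] sinhc) t =
      Gamma (n + 3 / 2) * hnu (n + 1 / 2) (t ^ 2 / 4) := by
    rw [hD, hΓ]
    ring
  refine ⟨h₁, ?_⟩
  rw [Bnu, show (n : ℝ) + 1 / 2 + 1 = n + 3 / 2 by ring, h₁]
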